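/- arXiv:2006.09160 — 4 statements merged into one kernel-verified Lean document; each statement's English description precedes it below -/
import Mathlib

section
/- Let G be a connected claw-free graph (a graph with no induced subgraph isomorphic to K_{1,3}), and let S be a minimal vertex separator of G (i.e., S is a set of vertices such that G - S is disconnected, and no proper subset of S has this property). Then G - S has exactly two connected components. -/
open SimpleGraph

universe u

/-- The claw `K_{1,3}`, with centre `0`. -/
def claw : SimpleGraph (Fin 4) := SimpleGraph.fromRel (fun a _ => a = 0)

/-- The bull: triangle `0 1 2` with horns `3` (adjacent to `0`) and `4` (adjacent to `1`). -/
def bull : SimpleGraph (Fin 5) := SimpleGraph.fromRel (fun a b =>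
  (a = 0 ∧ b = 1) ∨ (a = 0 ∧ b = 2) ∨ (a = 1 ∧ b = 2) ∨ (a = 3 ∧ b = 0) ∨ (a = 4 ∧ b = 1))

/-- The net: triangle `0 1 2` with pendant vertices `3`, `4`, `5` attached to `0`, `1`, `2`. -/
def net : SimpleGraph (Fin 6) := SimpleGraph.fromRel (fun a b =>
  (a = 0 ∧ b = 1) ∨ (a = 0 ∧ b = 2) ∨ (a = 1 ∧ b = 2) ∨
  (a = 3 ∧ b = 0) ∨ (a = 4 ∧ b = 1) ∨ (a = 5 ∧ b = 2))

/-- `S` is a vertex separator of `G`: deleting `S` leaves a disconnected graph. -/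
def IsSeparator {V : Type u} (G : SimpleGraph V) (S : Set V) : Prop :=
  ¬ (G.induce (Sᶜ : Set V)).Preconnected

/-- `S` is a minimal vertex separator of `G`. -/
def IsMinSeparator {V : Type u} (G : SimpleGraph V) (S : Set V) : Prop :=
  IsSeparator G S ∧ ∀ T : Set V, T ⊂ S → ¬ IsSeparator G T

/-- A ray (one-way infinite path) in `G`. -/
def IsRay {V : Type u} (G : SimpleGraph V) (f : ℕ → V) : Prop :=
  Function.Injective f ∧ ∀ n, G.Adj (f n) (f (n + 1))

/-- A double ray (two-way infinite path) in `G`. -/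
def IsDoubleRay {V : Type u} (G : SimpleGraph V) (f : ℤ → V) : Prop :=
  Function.Injective f ∧ ∀ n : ℤ, G.Adj (f n) (f (n + 1))

/-- The vertex set of the component `c` of `G - v`, together with `v` itself. -/
def compSet {V : Type u} (G : SimpleGraph V) (v : V)
    (c : (G.induce {x | x ≠ v}).ConnectedComponent) : Set V :=
  insert v {x : V | ∃ h : x ≠ v, (G.induce {x | x ≠ v}).connectedComponentMk ⟨x, h⟩ = c}

/-- `G` is distance-2-complete centered at `v`: `G - v` has exactly two connected components,
and in each component `C` and for each `i`, the vertices at distance `i` from `v` in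
`G[V(C) ∪ {v}]` induce a complete graph. -/
def DistanceTwoComplete {V : Type u} (G : SimpleGraph V) (v : V) : Prop :=
  (∃ c₁ c₂ : (G.induce {x | x ≠ v}).ConnectedComponent, c₁ ≠ c₂ ∧ ∀ c, c = c₁ ∨ c = c₂) ∧
  ∀ c : (G.induce {x | x ≠ v}).ConnectedComponent, ∀ i : ℕ, ∀ x y : V,
    ∀ hx : x ∈ compSet G v c, ∀ hy : y ∈ compSet G v c, x ≠ y →
    (G.induce (compSet G v c)).dist ⟨v, Set.mem_insert v _⟩ ⟨x, hx⟩ = i →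
    (G.induce (compSet G v c)).dist ⟨v, Set.mem_insert v _⟩ ⟨y, hy⟩ = i →
    G.Adj x y

/-- The ray `f` converges to the end `e` of `G`: for every finite vertex set `K`, a tail of the
ray lies in the component of `G - K` corresponding to `e`. -/
def RayTo {V : Type u} (G : SimpleGraph V) (f : ℕ → V) (e : G.end) : Prop :=
  ∀ K : Finset V, ∃ N : ℕ, ∀ n, N ≤ n →
    ∃ h : f n ∉ (K : Set V), G.componentComplMk h = e.val (Opposite.op K)

/-- The distance class: vertices of `R` at distance exactly `n` from `v` in `G[R ∪ {v}]`. -/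
def distClass {V : Type u} (G : SimpleGraph V) (v : V) (R : Set V) (n : ℕ) : Set V :=
  {x : V | x ∈ R ∧ ∃ h : x ∈ insert v R,
    (G.induce (insert v R)).dist ⟨v, Set.mem_insert v R⟩ ⟨x, h⟩ = n}

/-
Remove a single vertex `s` from a minimal separator `S`: what is left no longer separates, so
every vertex outside `S` is joined to `s` by a path through `Sᶜ`, and the last edge of such a
path shows that `s` has a neighbour in every component of `G - S`. Neighbours of `s` lying in
three different components would be pairwise distinct and non-adjacent, i.e. centre and leaves
of a claw.
-/

namespace SimpleGraph

variable {V : Type u} {G : SimpleGraph V}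

theorem IsSeparator.nonempty {S : Set V} (hG : G.Preconnected) (hS : IsSeparator G S) :
    S.Nonempty := by
  rw [Set.nonempty_iff_ne_empty]
  rintro rfl
  refine hS fun u v => ?_
  obtain ⟨p⟩ := hG u v
  exact ⟨p.induce _ fun w _ => Set.notMem_empty w⟩

theorem Walk.exists_adj_reachable_induce {A : Set V} {s : V} (hs : s ∉ A) :
    ∀ {x : V} (p : G.Walk x s), (∀ w ∈ p.support, w ∈ insert s A) → ∀ hx : x ∈ A,
      ∃ (y : V) (hy : y ∈ A), G.Adj s y ∧ (G.induce A).Reachable ⟨x, hx⟩ ⟨y, hy⟩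
  | _, .nil, _, hx => absurd hx hs
  | x, .cons (v := w) hxw q, hp, hx => by
    by_cases hws : w = s
    · subst hws
      exact ⟨x, hx, hxw.symm, .rfl⟩
    have hw : w ∈ A := (hp w (by simp)).resolve_left hws
    obtain ⟨y, hy, hsy, hwy⟩ :=
      q.exists_adj_reachable_induce hs (fun v hv => hp v (by simp [hv])) hw
    exact ⟨y, hy, hsy, (show (G.induce A).Adj ⟨x, hx⟩ ⟨w, hw⟩ from hxw).reachable.trans hwy⟩

theorem IsMinSeparator.exists_adj_connectedComponentMk_eq {S : Set V} (hS : IsMinSeparator G S)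
    {s : V} (hs : s ∈ S) (c : (G.induce Sᶜ).ConnectedComponent) :
    ∃ y : ↥Sᶜ, G.Adj s y ∧ (G.induce Sᶜ).connectedComponentMk y = c := by
  obtain ⟨x, rfl⟩ := c.exists_rep
  have hcompl : (S \ {s})ᶜ = insert s Sᶜ := by
    rw [Set.compl_sdiff, Set.singleton_union]
  have hconn : (G.induce (insert s Sᶜ)).Preconnected := by
    have h := hS.2 (S \ {s}) (Set.sdiff_singleton_ssubset.mpr hs)
    rwa [IsSeparator, not_not, hcompl] at h
  obtain ⟨p⟩ := hconn ⟨x, Set.mem_insert_of_mem s x.2⟩ ⟨s, Set.mem_insert s _⟩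
  let q := p.map (Embedding.induce _).toHom
  have hq : ∀ w ∈ q.support, w ∈ insert s Sᶜ := by
    intro w hw
    rw [Walk.support_map, List.mem_map] at hw
    obtain ⟨v, -, rfl⟩ := hw
    exact v.2
  obtain ⟨y, hy, hsy, hxy⟩ :=
    q.exists_adj_reachable_induce (Set.notMem_compl_iff.mpr hs) hq x.2
  exact ⟨⟨y, hy⟩, hsy, ConnectedComponent.sound hxy.symm⟩

theorem nonempty_claw_embedding {s a b d : V} (ha : G.Adj s a) (hb : G.Adj s b) (hd : G.Adj s d)
    (hab : a ≠ b) (had : a ≠ d) (hbd : b ≠ d)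
    (hab' : ¬ G.Adj a b) (had' : ¬ G.Adj a d) (hbd' : ¬ G.Adj b d) :
    Nonempty (claw ↪g G) := by
  refine ⟨⟨⟨![s, a, b, d], fun i j hij => ?_⟩, fun {i j} => ?_⟩⟩
  · fin_cases i <;> fin_cases j <;> simp_all [ha.ne, hb.ne, hd.ne]
  · show G.Adj (![s, a, b, d] i) (![s, a, b, d] j) ↔ claw.Adj i j
    fin_cases i <;> fin_cases j <;>
      simp [claw, ha, hb, hd, ha.symm, hb.symm, hd.symm, hab', had', hbd', G.adj_comm]

variable {A : Set V}

theorem ne_of_connectedComponentMk_ne {a b : ↥A}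
    (h : (G.induce A).connectedComponentMk a ≠ (G.induce A).connectedComponentMk b) :
    (a : V) ≠ b :=
  fun hab => h (congrArg _ (Subtype.ext hab))

theorem not_adj_of_connectedComponentMk_ne {a b : ↥A}
    (h : (G.induce A).connectedComponentMk a ≠ (G.induce A).connectedComponentMk b) :
    ¬ G.Adj a b :=
  fun hab => h (ConnectedComponent.sound (show (G.induce A).Adj a b from hab).reachable)

theorem eq_or_eq_or_eq_of_exists_adj (hclaw : IsEmpty (claw ↪g G)) {s : V}
    {c₁ c₂ c₃ : (G.induce A).ConnectedComponent}
    (h₁ : ∃ y : ↥A, G.Adj s y ∧ (G.induce A).connectedComponentMk y = c₁)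
    (h₂ : ∃ y : ↥A, G.Adj s y ∧ (G.induce A).connectedComponentMk y = c₂)
    (h₃ : ∃ y : ↥A, G.Adj s y ∧ (G.induce A).connectedComponentMk y = c₃) :
    c₁ = c₂ ∨ c₁ = c₃ ∨ c₂ = c₃ := by
  obtain ⟨a, ha, rfl⟩ := h₁
  obtain ⟨b, hb, rfl⟩ := h₂
  obtain ⟨d, hd, rfl⟩ := h₃
  by_contra! ⟨hab, had, hbd⟩
  exact hclaw.false (nonempty_claw_embedding ha hb hd
    (ne_of_connectedComponentMk_ne hab) (ne_of_connectedComponentMk_ne had)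
    (ne_of_connectedComponentMk_ne hbd) (not_adj_of_connectedComponentMk_ne hab)
    (not_adj_of_connectedComponentMk_ne had) (not_adj_of_connectedComponentMk_ne hbd)).some

end SimpleGraph

theorem stmt0 {V : Type u} (G : SimpleGraph V) (hconn : G.Connected)
    (hclaw : IsEmpty (claw ↪g G)) (S : Set V) (hS : IsMinSeparator G S) :
    ∃ c₁ c₂ : (G.induce (Sᶜ : Set V)).ConnectedComponent,
      c₁ ≠ c₂ ∧ ∀ c, c = c₁ ∨ c = c₂ := by
  obtain ⟨s, hs⟩ := hS.1.nonempty hconn.preconnected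
  obtain ⟨x, y, hxy⟩ : ∃ x y, ¬ (G.induce Sᶜ).Reachable x y := by
    simpa [IsSeparator, Preconnected] using hS.1
  have hne := mt ConnectedComponent.exact hxy
  refine ⟨_, _, hne, fun c => ?_⟩
  have hadj := hS.exists_adj_connectedComponentMk_eq hs
  rcases eq_or_eq_or_eq_of_exists_adj hclaw (hadj _) (hadj _) (hadj c) with h | h | h
  · exact absurd h hne
  · exact .inl h.symm
  · exact .inr h.symm
end

section
/- Let G be an infinite, locally finite, claw-free and bull-free graph. Then every finite ⊆-minimal vertex separator of G induces a complete subgraph (clique) of G. -/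
open SimpleGraph

universe u

/-!
Let `s, t ∈ S` be non-adjacent. By minimality every vertex of `S` has a neighbour in every
component of `G - S`; since `s` has only finitely many neighbours, `G - S` has finitely many
components, so one of them, `C`, is infinite. Take a shortest `s`–`t` path `q₀, …, q_d` in
`G[C ∪ {s, t}]`, and neighbours `a` of `s` and `b` of `t` in another component. Every vertex of
`X = {a, q₀, …, q_d, b}` adjacent to `C` has two non-adjacent neighbours in `X`. As `C` is
infinite and connected while the closed neighbourhood of `X` is finite, some `u ∈ C` adjacent
to `X` has a neighbour `w` outside that neighbourhood, and then `u`, `w`, a neighbour `x ∈ X`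
of `u` and the two neighbours of `x` contain a claw or a bull.
-/

section

variable {V : Type u} {G : SimpleGraph V}

namespace SimpleGraph

lemma Walk.dist_getVert_add_two {u v : V} {p : G.Walk u v}
    (hp : p.length = G.dist u v) {i : ℕ} (hi : i + 2 ≤ p.length) :
    G.dist (p.getVert i) (p.getVert (i + 2)) = 2 := by
  have hsub : ((p.drop i).take 2).IsSubwalk p :=
    (Walk.isSubwalk_take _ 2).trans (Walk.isSubwalk_drop p i)
  have h := length_eq_dist_of_subwalk hp hsub
  rw [Walk.take_length, Walk.drop_length] at h
  rw [← Walk.drop_getVert, ← h]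
  omega

lemma exists_boundary_adj_of_preconnected_induce {C F : Set V}
    (hC : (G.induce C).Preconnected) (hCF : (C ∩ F).Nonempty) (hCF' : (C \ F).Nonempty) :
    ∃ u ∈ C, ∃ w, G.Adj u w ∧ u ∈ F ∧ w ∉ F := by
  obtain ⟨v, hvC, hvF⟩ := hCF
  obtain ⟨z, hzC, hzF⟩ := hCF'
  obtain ⟨p⟩ := hC ⟨v, hvC⟩ ⟨z, hzC⟩
  obtain ⟨d, -, hd, hd'⟩ := p.exists_boundary_dart {x | x.1 ∈ F} hvF hzF
  exact ⟨d.fst, d.fst.2, d.snd, d.adj, hd, hd'⟩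

variable {W : Type*} {H : SimpleGraph W}

lemma ConnectedComponent.exists_ne_of_not_preconnected (h : ¬H.Preconnected)
    (C : H.ConnectedComponent) : ∃ C', C' ≠ C := by
  by_contra! hC
  exact h fun x y => ConnectedComponent.exact ((hC _).trans (hC _).symm)

lemma ConnectedComponent.exists_supp_infinite [Infinite W] {N : Set W} (hN : N.Finite)
    (hmeet : ∀ C : H.ConnectedComponent, (C.supp ∩ N).Nonempty) :
    ∃ C : H.ConnectedComponent, C.supp.Infinite := by
  by_contra! hfin
  refine Set.infinite_univ ((hN.biUnion fun v _ => hfin (H.connectedComponentMk v)).subset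
    fun x _ => ?_)
  obtain ⟨v, hv, hvN⟩ := hmeet (H.connectedComponentMk x)
  exact Set.mem_biUnion hvN hv.symm

lemma ConnectedComponent.preconnected_induce_image_supp {S : Set V}
    (C : (G.induce S).ConnectedComponent) : (G.induce (Subtype.val '' C.supp)).Preconnected :=
  C.connected_toSimpleGraph.preconnected.map
    (induceHom (Embedding.induce S).toHom (Set.mapsTo_image _ _))
    (by rintro ⟨_, v, hv, rfl⟩; exact ⟨⟨v, hv⟩, rfl⟩)

lemma ConnectedComponent.ne_and_not_adj_of_ne {S : Set V}
    {C C' : (G.induce S).ConnectedComponent} (hCC' : C ≠ C') {a : S} (ha : a ∈ C'.supp) :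
    ∀ v ∈ Subtype.val '' C.supp, v ≠ a ∧ ¬G.Adj v a := by
  rintro _ ⟨v, hv, rfl⟩
  refine ⟨fun h => hCC' ?_, fun h => hCC' ?_⟩
  · rw [← hv, ← ha, Subtype.ext h]
  · rw [← hv, ← ha]
    exact ConnectedComponent.connectedComponentMk_eq_of_adj (G := G.induce S) h

end SimpleGraph

lemma exists_geodesic_through {C : Set V} (hC : (G.induce C).Preconnected)
    {s t : V} (hst : s ≠ t) (hadj : ¬G.Adj s t) (hs : ∃ v ∈ C, G.Adj s v)
    (ht : ∃ v ∈ C, G.Adj t v) :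
    ∃ (d : ℕ) (q : ℕ → V), 2 ≤ d ∧ q 0 = s ∧ q d = t ∧ (∀ i < d, G.Adj (q i) (q (i + 1))) ∧
      (∀ i, i + 2 ≤ d → q i ≠ q (i + 2) ∧ ¬G.Adj (q i) (q (i + 2))) ∧
      ∀ i, 0 < i → i < d → q i ∈ C := by
  set A := insert s (insert t C)
  have hsA : s ∈ A := Set.mem_insert _ _
  have htA : t ∈ A := Set.mem_insert_of_mem _ (Set.mem_insert _ _)
  have hCA : C ⊆ A := (Set.subset_insert _ _).trans (Set.subset_insert _ _)
  obtain ⟨c, hc, hsc⟩ := hs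
  obtain ⟨c', hc', htc⟩ := ht
  have hreach : (G.induce A).Reachable ⟨s, hsA⟩ ⟨t, htA⟩ := by
    have hcc' := (hC ⟨c, hc⟩ ⟨c', hc'⟩).map (G.induceHomOfLE hCA).toHom
    have hsc' : (G.induce A).Adj ⟨s, hsA⟩ ⟨c, hCA hc⟩ := hsc
    have htc' : (G.induce A).Adj ⟨c', hCA hc'⟩ ⟨t, htA⟩ := htc.symm
    exact (hsc'.reachable.trans hcc').trans htc'.reachable
  obtain ⟨p, hpath, hlen⟩ := hreach.exists_path_of_dist
  refine ⟨p.length, fun i => p.getVert i, ?_, by simp, by simp,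
    fun i hi => p.adj_getVert_succ hi, fun i hi => ?_, fun i hi hi' => ?_⟩
  · by_contra! hd
    interval_cases h : p.length
    · exact hst congr($(Walk.eq_of_length_eq_zero h).1)
    · exact hadj (Walk.adj_of_length_eq_one (G := G.induce A) (p := p) h)
  · have h2 := Walk.dist_getVert_add_two hlen hi
    refine ⟨fun h => ?_, fun h => ?_⟩
    · simp [Subtype.ext h] at h2
    · rw [(dist_eq_one_iff_adj (G := G.induce A)).mpr h] at h2
      simp at h2
  · have hinj {j} (hj : j ≤ p.length) (h : p.getVert i = p.getVert j) : i = j :=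
      hpath.getVert_injOn hi'.le hj h
    rcases (p.getVert i).2 with h | h | h
    · exact absurd (hinj (Nat.zero_le _) (Subtype.ext (by simpa using h))) hi.ne'
    · exact absurd (hinj le_rfl (Subtype.ext (by simpa using h))) hi'.ne
    · exact h

lemma nonempty_claw_embedding {c x y z : V} (hx : G.Adj c x) (hy : G.Adj c y) (hz : G.Adj c z)
    (hxy : ¬G.Adj x y) (hxz : ¬G.Adj x z) (hyz : ¬G.Adj y z)
    (nxy : x ≠ y) (nxz : x ≠ z) (nyz : y ≠ z) : Nonempty (claw ↪g G) := by
  refine ⟨⟨⟨![c, x, y, z], ?_⟩, fun {i j} => ?_⟩⟩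
  · intro i j hij
    fin_cases i <;> fin_cases j <;>
      simp_all [hx.ne, hy.ne, hz.ne, hx.ne', hy.ne', hz.ne', eq_comm]
  · change G.Adj (![c, x, y, z] i) (![c, x, y, z] j) ↔ claw.Adj i j
    fin_cases i <;> fin_cases j <;>
      simp [claw, hx.symm, hy.symm, hz.symm, mt G.adj_symm hxy, mt G.adj_symm hxz,
        mt G.adj_symm hyz, *]

lemma nonempty_bull_embedding {a b c d e : V} (hab : G.Adj a b) (hac : G.Adj a c)
    (hbc : G.Adj b c) (hda : G.Adj d a) (heb : G.Adj e b)
    (hdb : ¬G.Adj d b) (hdc : ¬G.Adj d c) (hea : ¬G.Adj e a) (hec : ¬G.Adj e c)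
    (hde : ¬G.Adj d e) (ndb : d ≠ b) (ndc : d ≠ c) (nea : e ≠ a) (nec : e ≠ c) (nde : d ≠ e) :
    Nonempty (bull ↪g G) := by
  refine ⟨⟨⟨![a, b, c, d, e], ?_⟩, fun {i j} => ?_⟩⟩
  · intro i j hij
    fin_cases i <;> fin_cases j <;>
      simp_all [hab.ne, hac.ne, hbc.ne, hda.ne, heb.ne, hab.ne', hac.ne', hbc.ne', hda.ne',
        heb.ne', eq_comm]
  · change G.Adj (![a, b, c, d, e] i) (![a, b, c, d, e] j) ↔ bull.Adj i j
    fin_cases i <;> fin_cases j <;>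
      simp [bull, hab.symm, hac.symm, hbc.symm, hda.symm, heb.symm, mt G.adj_symm hdb,
        mt G.adj_symm hdc, mt G.adj_symm hea, mt G.adj_symm hec, mt G.adj_symm hde, *]

lemma exists_adj_of_clawFree_of_bullFree (hclaw : IsEmpty (claw ↪g G))
    (hbull : IsEmpty (bull ↪g G)) {X : Set V} {x y z u w : V} (hx : x ∈ X) (hy : y ∈ X)
    (hz : z ∈ X) (hxy : G.Adj x y) (hxz : G.Adj x z) (nyz : y ≠ z) (hyz : ¬G.Adj y z)
    (hxu : G.Adj x u) (huw : G.Adj u w) (hu : u ∉ X) (hw : w ∉ X) : ∃ v ∈ X, G.Adj v w := by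
  by_contra! hwX
  have nu : ∀ {v}, v ∈ X → v ≠ u := fun hv => ne_of_mem_of_not_mem hv hu
  have nw : ∀ {v}, v ∈ X → v ≠ w := fun hv => ne_of_mem_of_not_mem hv hw
  -- a claw centred at `u` or at `x`, or a bull on the triangle `x u y` or `x u z`
  by_cases huy : G.Adj u y <;> by_cases huz : G.Adj u z
  · exact hclaw.elim (nonempty_claw_embedding huy huz huw hyz (hwX y hy) (hwX z hz)
      nyz (nw hy) (nw hz)).some
  · exact hbull.elim (nonempty_bull_embedding hxu hxy huy hxz.symm huw.symm (mt G.adj_symm huz)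
      (mt G.adj_symm hyz) (hwX x hx ∘ G.adj_symm) (hwX y hy ∘ G.adj_symm) (hwX z hz) (nu hz)
      nyz.symm (nw hx).symm (nw hy).symm (nw hz)).some
  · exact hbull.elim (nonempty_bull_embedding hxu hxz huz hxy.symm huw.symm (mt G.adj_symm huy)
      hyz (hwX x hx ∘ G.adj_symm) (hwX z hz ∘ G.adj_symm) (hwX y hy) (nu hy) nyz
      (nw hx).symm (nw hz).symm (nw hy)).some
  · exact hclaw.elim (nonempty_claw_embedding hxy hxz hxu hyz (mt G.adj_symm huy)
      (mt G.adj_symm huz) nyz (nu hy) (nu hz)).some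

lemma false_of_finite_set_with_nonadj_nbrs (hclaw : IsEmpty (claw ↪g G))
    (hbull : IsEmpty (bull ↪g G)) (hlf : ∀ v, (G.neighborSet v).Finite) {C X : Set V}
    (hC : (G.induce C).Preconnected) (hCinf : C.Infinite) (hX : X.Finite)
    (hXC : (C ∩ X).Nonempty)
    (hnbr : ∀ x ∈ X, ∀ u ∈ C, G.Adj x u →
      ∃ y ∈ X, ∃ z ∈ X, G.Adj x y ∧ G.Adj x z ∧ y ≠ z ∧ ¬G.Adj y z) : False := by
  set F := X ∪ ⋃ x ∈ X, G.neighborSet x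
  have hF : F.Finite := hX.union (hX.biUnion fun x _ => hlf x)
  obtain ⟨u, huC, w, huw, huF, hwF⟩ := exists_boundary_adj_of_preconnected_induce hC
    (hXC.mono (Set.inter_subset_inter_right C Set.subset_union_left)) (hCinf.sdiff hF).nonempty
  have hu : u ∉ X := fun h => hwF (Or.inr (Set.mem_biUnion h huw))
  obtain ⟨x, hx, hxu⟩ : ∃ x ∈ X, G.Adj x u := by simpa [F, hu] using huF
  obtain ⟨y, hy, z, hz, hxy, hxz, nyz, hyz⟩ := hnbr x hx u huC hxu
  obtain ⟨v, hv, hvw⟩ := exists_adj_of_clawFree_of_bullFree hclaw hbull hx hy hz hxy hxz nyz hyz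
    hxu huw hu (fun h => hwF (Or.inl h))
  exact hwF (Or.inr (Set.mem_biUnion hv hvw))

lemma exists_finite_set_with_nonadj_nbrs {C : Set V} (hC : (G.induce C).Preconnected)
    {s t a b : V} (hst : s ≠ t) (hadj : ¬G.Adj s t) (hs : ∃ v ∈ C, G.Adj s v)
    (ht : ∃ v ∈ C, G.Adj t v) (hsa : G.Adj s a) (htb : G.Adj t b)
    (haC : ∀ v ∈ C, v ≠ a ∧ ¬G.Adj v a) (hbC : ∀ v ∈ C, v ≠ b ∧ ¬G.Adj v b) :
    ∃ X : Set V, X.Finite ∧ (C ∩ X).Nonempty ∧ ∀ x ∈ X, ∀ u ∈ C, G.Adj x u →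
      ∃ y ∈ X, ∃ z ∈ X, G.Adj x y ∧ G.Adj x z ∧ y ≠ z ∧ ¬G.Adj y z := by
  obtain ⟨d, q, hd, rfl, rfl, hq, hq2, hqC⟩ := exists_geodesic_through hC hst hadj hs ht
  have hq' {i} (hi : i ≤ d) : q i ∈ insert a (insert b (q '' Set.Iic d)) :=
    .inr (.inr ⟨i, hi, rfl⟩)
  refine ⟨_, (((Set.finite_Iic d).image q).insert b).insert a,
    ⟨q 1, hqC 1 one_pos (by omega), hq' (by omega)⟩, ?_⟩
  rintro x (rfl | rfl | ⟨_ | k, hk, rfl⟩) u hu hxu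
  · exact absurd hxu.symm (haC u hu).2
  · exact absurd hxu.symm (hbC u hu).2
  · have h1 := haC (q 1) (hqC 1 one_pos (by omega))
    exact ⟨a, .inl rfl, q 1, hq' (by omega), hsa, hq 0 (by omega), h1.1.symm,
      fun h => h1.2 h.symm⟩
  · rcases (Set.mem_Iic.1 hk).lt_or_eq with hk | rfl
    · exact ⟨q k, hq' (by omega), q (k + 2), hq' hk, (hq k (by omega)).symm, hq (k + 1) hk,
        hq2 k hk⟩
    · have hkC := hbC (q k) (hqC k (by omega) (by omega))
      exact ⟨q k, hq' (by omega), b, .inr (.inl rfl), (hq k (by omega)).symm, htb, hkC.1,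
        hkC.2⟩

lemma IsMinSeparator.exists_adj_mem_supp {S : Set V} (hS : IsMinSeparator G S) {u : V}
    (hu : u ∈ S) (C : (G.induce Sᶜ).ConnectedComponent) : ∃ v ∈ C.supp, G.Adj u v := by
  obtain ⟨x, hx⟩ := C.nonempty_supp
  obtain ⟨C', hC'⟩ := ConnectedComponent.exists_ne_of_not_preconnected hS.1 C
  obtain ⟨y, hy⟩ := C'.nonempty_supp
  have hpre : (G.induce (S \ {u})ᶜ).Preconnected :=
    not_not.1 (hS.2 _ (Set.sdiff_singleton_ssubset.2 hu))
  have hsub : Sᶜ ⊆ (S \ {u})ᶜ := Set.compl_subset_compl.2 Set.sdiff_subset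
  obtain ⟨p⟩ := hpre (Set.inclusion hsub x) (Set.inclusion hsub y)
  obtain ⟨d, -, ⟨h1, hd1⟩, hd2⟩ := p.exists_boundary_dart
    {v | ∃ h : v.1 ∉ S, (⟨v.1, h⟩ : ↥Sᶜ) ∈ C.supp} ⟨x.2, hx⟩ fun ⟨_, hy'⟩ => hC' (hy ▸ hy')
  have hadj : G.Adj d.fst.1 d.snd.1 := d.adj
  by_cases h2 : d.snd.1 ∈ S
  · have hdu : d.snd.1 = u := by_contra fun hne => d.snd.2 ⟨h2, hne⟩
    rw [← hdu]
    exact ⟨⟨d.fst.1, h1⟩, hd1, hadj.symm⟩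
  · have hadj' : (G.induce Sᶜ).Adj ⟨_, h1⟩ ⟨_, h2⟩ := hadj
    exact (hd2 ⟨h2, (C.mem_supp_congr_adj hadj').1 hd1⟩).elim

end

theorem stmt5 {V : Type u} (G : SimpleGraph V) (hinf : Infinite V)
    (hlf : ∀ v : V, (G.neighborSet v).Finite)
    (hclaw : IsEmpty (claw ↪g G)) (hbull : IsEmpty (bull ↪g G))
    (S : Set V) (hSfin : S.Finite) (hS : IsMinSeparator G S) :
    S.Pairwise G.Adj := by
  intro s hs t ht hst
  by_contra hadj
  have : Infinite ↥Sᶜ := hSfin.infinite_compl.to_subtype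
  obtain ⟨C, hC⟩ := ConnectedComponent.exists_supp_infinite
    ((hlf s).preimage Subtype.val_injective.injOn) (hS.exists_adj_mem_supp hs)
  obtain ⟨C', hC'⟩ := ConnectedComponent.exists_ne_of_not_preconnected hS.1 C
  obtain ⟨a, ha, hsa⟩ := hS.exists_adj_mem_supp hs C'
  obtain ⟨b, hb, htb⟩ := hS.exists_adj_mem_supp ht C'
  have hnbr {v} (hv : v ∈ S) : ∃ w ∈ Subtype.val '' C.supp, G.Adj v w :=
    let ⟨w, hw, hvw⟩ := hS.exists_adj_mem_supp hv C
    ⟨w, ⟨w, hw, rfl⟩, hvw⟩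
  obtain ⟨X, hX, hXC, hXnbr⟩ := exists_finite_set_with_nonadj_nbrs
    C.preconnected_induce_image_supp hst hadj (hnbr hs) (hnbr ht) hsa htb
    (C.ne_and_not_adj_of_ne hC'.symm ha) (C.ne_and_not_adj_of_ne hC'.symm hb)
  exact false_of_finite_set_with_nonadj_nbrs hclaw hbull hlf C.preconnected_induce_image_supp
    (hC.image Subtype.val_injective.injOn) hX hXC hXnbr
end

section
/- Every locally finite, connected, claw-free and net-free graph has at most two ends. -/
open SimpleGraph

universe u

/-!
Suppose `G` has three distinct ends and let `K` be a finite vertex set, minimal under inclusion,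
that separates them pairwise; they live in three distinct infinite components `C₁, C₂, C₃` of
`G - K`. By minimality, deleting any `s` from `K` merges two of the `Cᵢ`, so `s` has neighbours
in two of them, and by claw-freeness in at most two. As every `Cᵢ` has a neighbour in `K`, after
relabelling there are `s, t ∈ K` such that `s` sees `A` and `B` but not `C`, while `t` sees `B`
and `C` but not `A`.

A shortest path from a neighbour of `s` in `A` to a neighbour of `t` in `C`, all of whose inner
vertices lie in `B ∪ {s, t}`, is an induced path through `s`. Since `B` is infinite and connected
and `G` is locally finite, `B` contains an edge `z₁z₂` with `z₁` adjacent to the path and `z₂`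
neither on it nor adjacent to it. If `z₁` sees a single path vertex, or two consecutive ones, or two
at distance at least two along the path, one finds an induced claw, net, or claw respectively.
-/

namespace SimpleGraph

variable {V : Type u} {G : SimpleGraph V}

theorem injective_of_forall_adj_iff {W : Type*} {H : SimpleGraph W}
    (hH : H.neighborSet.Injective) {f : W → V} (hf : ∀ a b, G.Adj (f a) (f b) ↔ H.Adj a b) :
    f.Injective :=
  fun a b hab => hH <| Set.ext fun c => by rw [mem_neighborSet, mem_neighborSet, ← hf, ← hf, hab]

theorem net_neighborSet_injective : net.neighborSet.Injective := by
  intro a b h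
  have h' : ∀ c, net.Adj a c ↔ net.Adj b c := fun c => Set.ext_iff.1 h c
  fin_cases a <;> fin_cases b <;> first | rfl | (exfalso; revert h'; simp [net]; decide)

theorem claw_isIndContained {v x y z : V} (hx : G.Adj v x) (hy : G.Adj v y) (hz : G.Adj v z)
    (hxy : ¬ G.Adj x y) (hxz : ¬ G.Adj x z) (hyz : ¬ G.Adj y z)
    (nxy : x ≠ y) (nxz : x ≠ z) (nyz : y ≠ z) : claw ⊴ G := by
  have hf : ∀ a b, G.Adj (![v, x, y, z] a) (![v, x, y, z] b) ↔ claw.Adj a b := by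
    intro a b
    fin_cases a <;> fin_cases b <;> simp [claw, G.adj_comm, *]
  refine ⟨⟨⟨![v, x, y, z], fun a b hab => ?_⟩, hf _ _⟩⟩
  fin_cases a <;> fin_cases b <;> simp_all [hx.ne, hy.ne, hz.ne, hx.ne', hy.ne', hz.ne']

theorem net_isIndContained {x₀ x₁ x₂ p₀ p₁ p₂ : V}
    (a01 : G.Adj x₀ x₁) (a02 : G.Adj x₀ x₂) (a12 : G.Adj x₁ x₂)
    (b0 : G.Adj x₀ p₀) (b1 : G.Adj x₁ p₁) (b2 : G.Adj x₂ p₂)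
    (n01 : ¬ G.Adj x₀ p₁) (n02 : ¬ G.Adj x₀ p₂) (n10 : ¬ G.Adj x₁ p₀)
    (n12 : ¬ G.Adj x₁ p₂) (n20 : ¬ G.Adj x₂ p₀) (n21 : ¬ G.Adj x₂ p₁)
    (m01 : ¬ G.Adj p₀ p₁) (m02 : ¬ G.Adj p₀ p₂) (m12 : ¬ G.Adj p₁ p₂) : net ⊴ G := by
  have hf : ∀ a b, G.Adj (![x₀, x₁, x₂, p₀, p₁, p₂] a) (![x₀, x₁, x₂, p₀, p₁, p₂] b) ↔
      net.Adj a b := by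
    intro a b
    fin_cases a <;> fin_cases b <;> simp [net, G.adj_comm, *]
  exact ⟨⟨⟨_, injective_of_forall_adj_iff net_neighborSet_injective hf⟩, hf _ _⟩⟩

end SimpleGraph

theorem exists_entry_exit {P : ℕ → Prop} [DecidablePred P] {n : ℕ} (h0 : ¬ P 0) (hn : ¬ P n)
    (hP : ∃ j ≤ n, P j) : ∃ i j, i < j ∧ j < n ∧ ¬ P i ∧ P (i + 1) ∧ P j ∧ ¬ P (j + 1) := by
  have hex : ∃ j, P j := hP.imp fun _ => And.right
  obtain ⟨j₀, hj₀n, hj₀⟩ := hP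
  have hfirst := Nat.find_spec hex
  have hfirst_le : Nat.find hex ≤ j₀ := Nat.find_min' hex hj₀
  have hfirst_pos : 0 < Nat.find hex := Nat.pos_of_ne_zero fun h => h0 (h ▸ hfirst)
  have hlast : P (Nat.findGreatest P n) := Nat.findGreatest_spec hj₀n hj₀
  have hlast_lt : Nat.findGreatest P n < n :=
    (Nat.findGreatest_le n).lt_of_ne fun h => hn (h ▸ hlast)
  refine ⟨Nat.find hex - 1, Nat.findGreatest P n, ?_, hlast_lt,
    Nat.find_min hex (by omega), by rwa [Nat.sub_add_cancel hfirst_pos], hlast,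
    Nat.findGreatest_is_greatest (Nat.lt_succ_self _) hlast_lt⟩
  have := Nat.le_findGreatest (hfirst_le.trans hj₀n) hfirst
  omega

namespace SimpleGraph.Walk

variable {V : Type u} {G : SimpleGraph V} {u v : V}

def Chordless (p : G.Walk u v) : Prop :=
  ∀ i j, i + 2 ≤ j → j ≤ p.length → ¬ G.Adj (p.getVert i) (p.getVert j)

theorem chordless_of_length_eq_dist (p : G.Walk u v) (hp : p.length = G.dist u v) :
    p.Chordless := by
  intro i j hij hj hadj
  have := G.dist_le ((p.take i).append (cons hadj (p.drop j)))
  simp only [length_append, length_cons, take_length, drop_length] at this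
  omega

theorem Chordless.map {W : Type*} {H : SimpleGraph W} (f : G ↪g H) {p : G.Walk u v}
    (hp : p.Chordless) : (p.map f.toHom).Chordless := by
  intro i j hij hj
  simpa [getVert_map] using hp i j hij (by simpa using hj)

theorem claw_or_net_of_attach {p : G.Walk u v} (hp : p.IsPath) (hc : p.Chordless) {z₁ z₂ : V}
    (hz : G.Adj z₁ z₂) (hz₁ : z₁ ∉ p.support) (hz₂ : z₂ ∉ p.support)
    (hz₂p : ∀ x ∈ p.support, ¬ G.Adj x z₂) (hu : ¬ G.Adj z₁ u) (hv : ¬ G.Adj z₁ v)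
    (hz₁p : ∃ x ∈ p.support, G.Adj z₁ x) : claw ⊴ G ∨ net ⊴ G := by
  classical
  set F := p.getVert
  have hadj (i : ℕ) (hi : i < p.length) : G.Adj (F i) (F (i + 1)) := p.adj_getVert_succ hi
  have hne (i j : ℕ) (hij : i < j) (hj : j ≤ p.length) : F i ≠ F j := fun h =>
    hij.ne (hp.getVert_injOn (by simp; omega) (by simpa using hj) h)
  have hz₁F (i : ℕ) : F i ≠ z₁ := fun h => hz₁ (h ▸ p.getVert_mem_support i)
  have hz₂F (i : ℕ) : F i ≠ z₂ := fun h => hz₂ (h ▸ p.getVert_mem_support i)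
  have hz₂F' (i : ℕ) : ¬ G.Adj (F i) z₂ := hz₂p _ (p.getVert_mem_support i)
  obtain ⟨i, j, hij, hjn, hi, hi₁, hj, hj₁⟩ :=
    exists_entry_exit (P := fun k => G.Adj z₁ (F k)) (n := p.length)
      (by simpa [F] using hu) (by simpa [F] using hv) (by
        obtain ⟨x, hx, hzx⟩ := hz₁p
        obtain ⟨k, rfl, hk⟩ := mem_support_iff_exists_getVert.1 hx
        exact ⟨k, hk, hzx⟩)
  rcases (by omega : j = i + 1 ∨ j = i + 2 ∨ i + 3 ≤ j) with rfl | rfl | hij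
  · exact .inl <| claw_isIndContained (hadj i (by omega)).symm (hadj (i + 1) (by omega)) hi₁.symm
      (hc i (i + 2) (by omega) (by omega)) (fun h => hi h.symm) (fun h => hj₁ h.symm)
      (hne i (i + 2) (by omega) (by omega)) (hz₁F i) (hz₁F (i + 2))
  · exact .inr <| net_isIndContained (hadj (i + 1) (by omega)) hi₁.symm hj.symm
      (hadj i (by omega)).symm (hadj (i + 2) (by omega)) hz
      (hc (i + 1) (i + 3) (by omega) (by omega)) (hz₂F' _)
      (fun h => hc i (i + 2) (by omega) (by omega) h.symm) (hz₂F' _) hi hj₁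
      (hc i (i + 3) (by omega) (by omega)) (hz₂F' _) (hz₂F' _)
  · exact .inl <| claw_isIndContained hi₁ hj hz (hc (i + 1) j (by omega) (by omega))
      (hz₂F' _) (hz₂F' _) (hne (i + 1) j (by omega) (by omega)) (hz₂F _) (hz₂F _)

end SimpleGraph.Walk

theorem SimpleGraph.Reachable.exists_chordless_path_of_induce {V : Type u} {G : SimpleGraph V}
    {S : Set V} {u v : S} (h : (G.induce S).Reachable u v) :
    ∃ p : G.Walk u v, p.IsPath ∧ p.Chordless ∧ ∀ x ∈ p.support, x ∈ S := by
  obtain ⟨q, hq⟩ := h.exists_walk_length_eq_dist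
  refine ⟨q.map (Embedding.induce S).toHom,
    (q.isPath_of_length_eq_dist hq).map Subtype.val_injective,
    (q.chordless_of_length_eq_dist hq).map _, fun x hx => ?_⟩
  obtain ⟨y, -, rfl⟩ := List.mem_map.1 (q.support_map _ ▸ hx)
  exact y.2

namespace SimpleGraph.ComponentCompl

variable {V : Type u} {G : SimpleGraph V} {K L : Set V} {C D : G.ComponentCompl K} {x y : V}

def Touches (C : G.ComponentCompl K) (s : V) : Prop := ∃ w ∈ C, G.Adj s w

theorem ne_of_mem_of_ne (hCD : C ≠ D) (hx : x ∈ C) (hy : y ∈ D) : x ≠ y :=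
  fun h => Set.disjoint_left.1 (ComponentCompl.pairwise_disjoint hCD) hx (h ▸ hy)

theorem not_adj_of_ne (hCD : C ≠ D) (hx : x ∈ C) (hy : y ∈ D) : ¬ G.Adj x y :=
  fun h => ne_of_mem_of_ne hCD (mem_of_adj x y hx (notMem_of_mem hy) h) hy rfl

theorem exists_adj_of_walk (p : G.Walk x y) (hx : x ∈ C) (hy : y ∉ C) :
    ∃ w ∈ C, ∃ k ∈ p.support, k ∈ K ∧ G.Adj w k := by
  obtain ⟨d, hd, hfst, hsnd⟩ := p.exists_boundary_dart C hx hy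
  refine ⟨d.fst, hfst, d.snd, p.dart_snd_mem_support_of_mem_darts hd, ?_, d.adj⟩
  by_contra hK
  exact hsnd (mem_of_adj _ _ hfst hK d.adj)

theorem exists_walk_support_subset (hx : x ∈ C) (hy : y ∈ C) :
    ∃ p : G.Walk x y, ∀ v ∈ p.support, v ∈ C := by
  classical
  obtain ⟨hxK, rfl⟩ := hx
  obtain ⟨hyK, hxy⟩ := hy
  obtain ⟨q⟩ := ConnectedComponent.exact hxy.symm
  refine ⟨q.map (Embedding.induce Kᶜ).toHom, fun v hv => ?_⟩
  obtain ⟨u, hu, rfl⟩ := List.mem_map.1 (q.support_map _ ▸ hv)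
  exact ⟨u.2, ConnectedComponent.sound ⟨(q.takeUntil u hu).reverse⟩⟩

theorem exists_touches_of_ne (hG : G.Preconnected) (hCD : C ≠ D) : ∃ k ∈ K, C.Touches k := by
  obtain ⟨x, hx⟩ := C.nonempty
  obtain ⟨y, hy⟩ := D.nonempty
  obtain ⟨w, hw, k, -, hk, hwk⟩ :=
    exists_adj_of_walk (hG x y).some hx fun hyC => ne_of_mem_of_ne hCD hyC hy rfl
  exact ⟨k, hk, w, hw, hwk.symm⟩

theorem touches_of_hom_eq {s : V} (hLK : L ⊆ K) (hK : K ⊆ insert s L) (hCD : C ≠ D)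
    (h : C.hom hLK = D.hom hLK) : C.Touches s := by
  obtain ⟨x, hx⟩ := C.nonempty
  obtain ⟨y, hy⟩ := D.nonempty
  have hyC : y ∈ C.hom hLK := h ▸ D.subset_hom hLK hy
  obtain ⟨p, hp⟩ := exists_walk_support_subset (C.subset_hom hLK hx) hyC
  obtain ⟨w, hw, k, hkp, hk, hwk⟩ :=
    exists_adj_of_walk p hx fun hyC' => ne_of_mem_of_ne hCD hyC' hy rfl
  obtain rfl : k = s := (hK hk).resolve_right (notMem_of_mem (hp k hkp))
  exact ⟨w, hw, hwk.symm⟩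

theorem not_touches_of_touches (hclaw : IsEmpty (claw ↪g G)) {E : G.ComponentCompl K}
    (hCD : C ≠ D) (hCE : C ≠ E) (hDE : D ≠ E) {s : V} (hC : C.Touches s) (hD : D.Touches s) :
    ¬ E.Touches s := by
  rintro ⟨z, hz, hsz⟩
  obtain ⟨x, hx, hsx⟩ := hC
  obtain ⟨y, hy, hsy⟩ := hD
  exact hclaw.false (claw_isIndContained hsx hsy hsz (not_adj_of_ne hCD hx hy)
    (not_adj_of_ne hCE hx hz) (not_adj_of_ne hDE hy hz) (ne_of_mem_of_ne hCD hx hy)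
    (ne_of_mem_of_ne hCE hx hz) (ne_of_mem_of_ne hDE hy hz)).some

theorem exists_adj_far_of_finite (hlf : ∀ v : V, (G.neighborSet v).Finite) {C : G.ComponentCompl K}
    (hC : (C : Set V).Infinite) {X : Set V} (hX : X.Finite) {s : V} (hs : s ∈ X)
    (hsC : C.Touches s) :
    ∃ z₁ ∈ C, ∃ z₂, G.Adj z₁ z₂ ∧ z₁ ∉ X ∧ z₂ ∉ X ∧ (∀ x ∈ X, ¬ G.Adj x z₂) ∧
      ∃ x ∈ X, G.Adj z₁ x := by
  obtain ⟨b, hb, hsb⟩ := hsC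
  set W := X ∪ ⋃ x ∈ X, G.neighborSet x
  have hW : W.Finite := hX.union (hX.biUnion fun x _ => hlf x)
  obtain ⟨v₀, hv₀, hv₀W⟩ := (hC.sdiff hW).nonempty
  obtain ⟨p, hp⟩ := exists_walk_support_subset hv₀ hb
  obtain ⟨d, hd, hd₂, hd₁⟩ := p.exists_boundary_dart Wᶜ hv₀W
    (not_not.2 (Or.inr (Set.mem_biUnion hs hsb)))
  have hfar (x) (hx : x ∈ X) : ¬ G.Adj x d.fst := fun h => hd₂ (Or.inr (Set.mem_biUnion hx h))
  refine ⟨d.snd, hp _ (p.dart_snd_mem_support_of_mem_darts hd), d.fst, d.adj.symm,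
    fun h => hfar _ h d.adj.symm, fun h => hd₂ (Or.inl h), hfar, ?_⟩
  rcases not_not.1 hd₁ with h | h
  · exact absurd d.adj.symm (hfar _ h)
  · obtain ⟨x, hx, hxz⟩ := Set.mem_iUnion₂.1 h
    exact ⟨x, hx, hxz.symm⟩

theorem false_of_touches_chain (hlf : ∀ v : V, (G.neighborSet v).Finite)
    (hclaw : IsEmpty (claw ↪g G)) (hnet : IsEmpty (net ↪g G)) {A B C : G.ComponentCompl K}
    (hAB : A ≠ B) (hAC : A ≠ C) (hBC : B ≠ C) (hB : (B : Set V).Infinite) {s t : V}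
    (hsA : A.Touches s) (hsB : B.Touches s) (htB : B.Touches t) (htC : C.Touches t) : False := by
  have htA : ¬ A.Touches t := not_touches_of_touches hclaw hBC hAB.symm hAC.symm htB htC
  obtain ⟨a, ha, hsa⟩ := hsA
  obtain ⟨b, hb, hsb⟩ := hsB
  obtain ⟨b', hb', htb'⟩ := htB
  obtain ⟨c, hc, htc⟩ := htC
  obtain ⟨q, hq⟩ := exists_walk_support_subset hb hb'
  set S : Set V := {a, s, t, c} ∪ B
  let w : G.Walk a c := .cons hsa.symm (.cons hsb (q.append (.cons htb'.symm (.cons htc .nil))))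
  have hw : ∀ x ∈ w.support, x ∈ S := by
    intro x hx
    simp only [w, Walk.support_cons, Walk.support_append, Walk.support_nil, List.tail_cons,
      List.mem_cons, List.mem_append, List.mem_nil_iff, or_false] at hx
    rcases hx with rfl | rfl | hx | rfl | rfl
    all_goals first | exact .inr (hq _ hx) | simp [S]
  obtain ⟨p, hp, hpc, hpS⟩ := (w.induce S hw).reachable.exists_chordless_path_of_induce
  have hsp : s ∈ p.support := by
    have hnil : ¬ p.Nil := fun h => ne_of_mem_of_ne hAC ha hc h.eq
    have hsnd : p.snd ∈ S := hpS _ (p.getVert_mem_support 1)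
    have hasnd : G.Adj a p.snd := p.adj_snd hnil
    suffices p.snd = s from this ▸ p.getVert_mem_support 1
    rcases hsnd with (h | h | h | h) | h
    · exact absurd h.symm hasnd.ne
    · exact h
    · rw [h] at hasnd
      exact absurd ⟨a, ha, hasnd.symm⟩ htA
    · rw [h] at hasnd
      exact absurd hasnd (not_adj_of_ne hAC ha hc)
    · exact absurd hasnd (not_adj_of_ne hAB ha h)
  obtain ⟨z₁, hz₁B, z₂, hz, hz₁, hz₂, hz₂p, hz₁p⟩ :=
    exists_adj_far_of_finite hlf hB p.support.finite_toSet hsp ⟨b, hb, hsb⟩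
  rcases p.claw_or_net_of_attach hp hpc hz hz₁ hz₂ hz₂p
    (fun h => not_adj_of_ne hAB ha hz₁B h.symm) (not_adj_of_ne hBC hz₁B hc) hz₁p with h | h
  exacts [hclaw.false h.some, hnet.false h.some]

theorem false_of_forall_touches_two (hlf : ∀ v : V, (G.neighborSet v).Finite)
    (hclaw : IsEmpty (claw ↪g G)) (hnet : IsEmpty (net ↪g G)) (hG : G.Preconnected) {K : Set V}
    {C₁ C₂ C₃ : G.ComponentCompl K} (h₁₂ : C₁ ≠ C₂) (h₁₃ : C₁ ≠ C₃) (h₂₃ : C₂ ≠ C₃)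
    (h₁ : (C₁ : Set V).Infinite) (h₂ : (C₂ : Set V).Infinite) (h₃ : (C₃ : Set V).Infinite)
    (htwo : ∀ s ∈ K, C₁.Touches s ∧ C₂.Touches s ∨ C₁.Touches s ∧ C₃.Touches s ∨
      C₂.Touches s ∧ C₃.Touches s) : False := by
  obtain ⟨s, hs, hs₁⟩ := exists_touches_of_ne hG h₁₂
  rcases htwo s hs with ⟨-, hs₂⟩ | ⟨-, hs₃⟩ | ⟨hs₂, hs₃⟩
  · obtain ⟨t, ht, ht₃⟩ := exists_touches_of_ne hG h₂₃.symm
    rcases htwo t ht with ⟨ht₁, ht₂⟩ | ⟨ht₁, -⟩ | ⟨ht₂, -⟩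
    · exact not_touches_of_touches hclaw h₁₂ h₁₃ h₂₃ ht₁ ht₂ ht₃
    · exact false_of_touches_chain hlf hclaw hnet h₁₂.symm h₂₃ h₁₃ h₁ hs₂ hs₁ ht₁ ht₃
    · exact false_of_touches_chain hlf hclaw hnet h₁₂ h₁₃ h₂₃ h₂ hs₁ hs₂ ht₂ ht₃
  · obtain ⟨t, ht, ht₂⟩ := exists_touches_of_ne hG h₂₃
    rcases htwo t ht with ⟨ht₁, -⟩ | ⟨ht₁, ht₃⟩ | ⟨-, ht₃⟩
    · exact false_of_touches_chain hlf hclaw hnet h₁₃.symm h₂₃.symm h₁₂ h₁ hs₃ hs₁ ht₁ ht₂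
    · exact not_touches_of_touches hclaw h₁₂ h₁₃ h₂₃ ht₁ ht₂ ht₃
    · exact false_of_touches_chain hlf hclaw hnet h₁₃ h₁₂ h₂₃.symm h₃ hs₁ hs₃ ht₃ ht₂
  · exact not_touches_of_touches hclaw h₁₂ h₁₃ h₂₃ hs₁ hs₂ hs₃

end SimpleGraph.ComponentCompl

namespace SimpleGraph

open Opposite CategoryTheory

variable {V : Type u} {G : SimpleGraph V}

theorem end_exists_val_ne {e f : G.end} (h : e ≠ f) :
    ∃ K : Finset V, e.val (op K) ≠ f.val (op K) := by
  by_contra! hK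
  exact h (Subtype.ext (funext fun K => hK K.unop))

theorem end_val_hom (e : G.end) {K L : Finset V} (h : K ⊆ L) :
    (e.val (op L)).hom (Finset.coe_subset.2 h) = e.val (op K) :=
  e.2 (opHomOfLE h)

theorem end_val_infinite (e : G.end) (K : Finset V) : (e.val (op K)).supp.Infinite :=
  (e.val (op K)).infinite_iff_in_all_ranges.2 fun L h => ⟨e.val (op L), end_val_hom e h⟩

theorem end_val_ne_of_subset {e f : G.end} {K L : Finset V} (h : K ⊆ L)
    (hK : e.val (op K) ≠ f.val (op K)) : e.val (op L) ≠ f.val (op L) := fun hL =>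
  hK (by rw [← end_val_hom e h, ← end_val_hom f h, hL])

theorem end_touches_of_val_erase_eq [DecidableEq V] {e f : G.end} {K : Finset V} {s : V}
    (hs : s ∈ K) (hK : e.val (op K) ≠ f.val (op K))
    (h : e.val (op (K.erase s)) = f.val (op (K.erase s))) :
    (e.val (op K)).Touches s ∧ (f.val (op K)).Touches s := by
  have hsub : (↑(K.erase s) : Set V) ⊆ K := Finset.coe_subset.2 (K.erase_subset s)
  have hK' : (K : Set V) ⊆ insert s ↑(K.erase s) := by
    rw [← Finset.coe_insert, Finset.insert_erase hs]
  have hhom : (e.val (op K)).hom hsub = (f.val (op K)).hom hsub := by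
    rw [end_val_hom e (K.erase_subset s), end_val_hom f (K.erase_subset s), h]
  exact ⟨ComponentCompl.touches_of_hom_eq hsub hK' hK hhom,
    ComponentCompl.touches_of_hom_eq hsub hK' hK.symm hhom.symm⟩

theorem end_exists_finset_touches_two {e₁ e₂ e₃ : G.end} (h₁₂ : e₁ ≠ e₂) (h₁₃ : e₁ ≠ e₃)
    (h₂₃ : e₂ ≠ e₃) : ∃ K : Finset V,
      (e₁.val (op K) ≠ e₂.val (op K) ∧ e₁.val (op K) ≠ e₃.val (op K) ∧
        e₂.val (op K) ≠ e₃.val (op K)) ∧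
      ∀ s ∈ K, (e₁.val (op K)).Touches s ∧ (e₂.val (op K)).Touches s ∨
        (e₁.val (op K)).Touches s ∧ (e₃.val (op K)).Touches s ∨
        (e₂.val (op K)).Touches s ∧ (e₃.val (op K)).Touches s := by
  classical
  obtain ⟨K₁₂, hK₁₂⟩ := end_exists_val_ne h₁₂
  obtain ⟨K₁₃, hK₁₃⟩ := end_exists_val_ne h₁₃
  obtain ⟨K₂₃, hK₂₃⟩ := end_exists_val_ne h₂₃
  obtain ⟨K, hK⟩ := exists_minimal_of_wellFoundedLT
    (fun K : Finset V => e₁.val (op K) ≠ e₂.val (op K) ∧ e₁.val (op K) ≠ e₃.val (op K) ∧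
      e₂.val (op K) ≠ e₃.val (op K))
    ⟨K₁₂ ∪ K₁₃ ∪ K₂₃, end_val_ne_of_subset (by grind) hK₁₂,
      end_val_ne_of_subset (by grind) hK₁₃, end_val_ne_of_subset (by grind) hK₂₃⟩
  refine ⟨K, hK.prop, fun s hs => ?_⟩
  obtain ⟨hK₁₂, hK₁₃, hK₂₃⟩ := hK.prop
  have hmin := hK.not_prop_of_lt (Finset.erase_ssubset hs)
  simp only [not_and_or, not_not] at hmin
  rcases hmin with h | h | h
  exacts [.inl (end_touches_of_val_erase_eq hs hK₁₂ h),
    .inr (.inl (end_touches_of_val_erase_eq hs hK₁₃ h)),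
    .inr (.inr (end_touches_of_val_erase_eq hs hK₂₃ h))]

end SimpleGraph

theorem stmt9 {V : Type u} (G : SimpleGraph V)
    (hlf : ∀ v : V, (G.neighborSet v).Finite) (hconn : G.Connected)
    (hclaw : IsEmpty (claw ↪g G)) (hnet : IsEmpty (net ↪g G)) :
    ∀ e₁ e₂ e₃ : G.end, e₁ = e₂ ∨ e₁ = e₃ ∨ e₂ = e₃ := by
  intro e₁ e₂ e₃
  by_contra! h
  obtain ⟨K, ⟨h₁₂, h₁₃, h₂₃⟩, htwo⟩ := end_exists_finset_touches_two h.1 h.2.1 h.2.2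
  exact ComponentCompl.false_of_forall_touches_two hlf hclaw hnet hconn.preconnected h₁₂ h₁₃ h₂₃
    (end_val_infinite e₁ K) (end_val_infinite e₂ K)
    (end_val_infinite e₃ K) htwo
end

section
/- Let G be a locally finite, connected, claw-free and net-free graph with exactly two ends, and let D be a geodetic double ray in G containing a ray to each of the two ends. Then every vertex of G is at distance at most 1 from D. -/
open SimpleGraph

universe u

/-!
Take a vertex `w` at distance at least two from the geodetic double ray `D = f`, as close to
`f 0` as possible. Its neighbour `u` towards `f 0` is then adjacent to some `f m`. Claw-freeness
at `f m` makes `u` adjacent to `f (m - 1)` or `f (m + 1)`; claw-freeness at `u` (with the leaf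
`w`) makes the indices of the `D`-neighbours of `u` differ by at most one. So `u` sees exactly
two consecutive vertices of `D`, say `f m` and `f (m + 1)`, and then the triangle
`u, f m, f (m + 1)` with pendants `w, f (m - 1), f (m + 2)` is an induced net.
-/

def clawEmbedding {V : Type u} {G : SimpleGraph V} (c a b d : V)
    (hca : G.Adj c a) (hcb : G.Adj c b) (hcd : G.Adj c d)
    (hab : ¬ G.Adj a b) (had : ¬ G.Adj a d) (hbd : ¬ G.Adj b d)
    (nab : a ≠ b) (nad : a ≠ d) (nbd : b ≠ d) : claw ↪g G := by
  let φ : Fin 4 → V := ![c, a, b, d]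
  refine ⟨⟨φ, ?_⟩, ?_⟩
  · intro i j hij
    fin_cases i <;> fin_cases j <;> simp_all [φ]
  · intro i j
    show G.Adj (φ i) (φ j) ↔ claw.Adj i j
    fin_cases i <;> fin_cases j <;> simp_all [φ, claw, SimpleGraph.fromRel_adj, G.adj_comm]

def netEmbedding {V : Type u} {G : SimpleGraph V} (t₀ t₁ t₂ p₀ p₁ p₂ : V)
    (a01 : G.Adj t₀ t₁) (a02 : G.Adj t₀ t₂) (a12 : G.Adj t₁ t₂)
    (b0 : G.Adj t₀ p₀) (b1 : G.Adj t₁ p₁) (b2 : G.Adj t₂ p₂)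
    (n01 : ¬ G.Adj t₀ p₁) (n02 : ¬ G.Adj t₀ p₂)
    (n10 : ¬ G.Adj t₁ p₀) (n12 : ¬ G.Adj t₁ p₂)
    (n20 : ¬ G.Adj t₂ p₀) (n21 : ¬ G.Adj t₂ p₁)
    (q01 : ¬ G.Adj p₀ p₁) (q02 : ¬ G.Adj p₀ p₂) (q12 : ¬ G.Adj p₁ p₂) : net ↪g G := by
  let φ : Fin 6 → V := ![t₀, t₁, t₂, p₀, p₁, p₂]
  refine ⟨⟨φ, ?_⟩, ?_⟩
  · intro i j hij
    fin_cases i <;> fin_cases j <;> simp_all [φ, G.adj_comm]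
  · intro i j
    show G.Adj (φ i) (φ j) ↔ net.Adj i j
    fin_cases i <;> fin_cases j <;> simp_all [φ, net, SimpleGraph.fromRel_adj, G.adj_comm]

def IsGeodeticDoubleRay {V : Type u} (G : SimpleGraph V) (f : ℤ → V) : Prop :=
  ∀ m n : ℤ, G.dist (f m) (f n) = (m - n).natAbs

namespace IsGeodeticDoubleRay

variable {V : Type u} {G : SimpleGraph V} {f : ℤ → V}

theorem adj_iff (hD : IsGeodeticDoubleRay G f) (a b : ℤ) :
    G.Adj (f a) (f b) ↔ (a - b).natAbs = 1 := by
  rw [← dist_eq_one_iff_adj, hD]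

theorem injective (hD : IsGeodeticDoubleRay G f) : Function.Injective f := fun a b hab => by
  have := hD a b
  rw [hab, dist_self] at this
  omega

theorem reachable (hD : IsGeodeticDoubleRay G f) (a b : ℤ) : G.Reachable (f a) (f b) := by
  rcases eq_or_ne a b with rfl | hab
  · rfl
  · exact Reachable.of_dist_ne_zero (by rw [hD]; omega)

theorem comp_neg (hD : IsGeodeticDoubleRay G f) : IsGeodeticDoubleRay G (fun n => f (-n)) := by
  intro a b
  rw [hD]
  omega

theorem adj_succ_of_adj_of_not_adj_pred (hD : IsGeodeticDoubleRay G f)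
    (hclaw : IsEmpty (claw ↪g G)) {u : V} {m : ℤ} (hu : ∀ k, u ≠ f k) (hum : G.Adj u (f m))
    (hpred : ¬ G.Adj u (f (m - 1))) : G.Adj u (f (m + 1)) := by
  by_contra hsucc
  exact hclaw.false <| clawEmbedding (f m) (f (m - 1)) (f (m + 1)) u
    ((hD.adj_iff _ _).2 (by omega)) ((hD.adj_iff _ _).2 (by omega)) hum.symm
    ((hD.adj_iff _ _).not.2 (by omega)) (fun h => hpred h.symm)
    (fun h => hsucc h.symm) (fun h => by have := hD.injective h; omega)
    (fun h => hu _ h.symm) (fun h => hu _ h.symm)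

theorem natAbs_sub_le_one_of_adj (hD : IsGeodeticDoubleRay G f) (hclaw : IsEmpty (claw ↪g G))
    {w u : V} (hwu : G.Adj w u) (hwne : ∀ k, w ≠ f k) (hwadj : ∀ k, ¬ G.Adj w (f k))
    {a b : ℤ} (hua : G.Adj u (f a)) (hub : G.Adj u (f b)) : (a - b).natAbs ≤ 1 := by
  have hle : (a - b).natAbs ≤ 2 := by
    rw [← hD a b]
    exact dist_le (Walk.cons hua.symm (Walk.cons hub Walk.nil))
  by_contra hgt
  exact hclaw.false <| clawEmbedding u (f a) (f b) w hua hub hwu.symm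
    ((hD.adj_iff _ _).not.2 (by omega)) (fun h => hwadj a h.symm) (fun h => hwadj b h.symm)
    (fun h => by have := hD.injective h; omega) (fun h => hwne a h.symm) (fun h => hwne b h.symm)

theorem not_adj_succ_of_adj (hD : IsGeodeticDoubleRay G f) (hclaw : IsEmpty (claw ↪g G))
    (hnet : IsEmpty (net ↪g G)) {w u : V} (hwu : G.Adj w u) (hwne : ∀ k, w ≠ f k)
    (hwadj : ∀ k, ¬ G.Adj w (f k)) {m : ℤ} (hum : G.Adj u (f m)) : ¬ G.Adj u (f (m + 1)) := by
  intro hsucc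
  have hclose {a b : ℤ} (hua : G.Adj u (f a)) (hub : G.Adj u (f b)) : (a - b).natAbs ≤ 1 :=
    hD.natAbs_sub_le_one_of_adj hclaw hwu hwne hwadj hua hub
  by_cases hpred : G.Adj u (f (m - 1))
  · have := hclose hpred hsucc
    omega
  have hsucc₂ : ¬ G.Adj u (f (m + 2)) := fun h => by have := hclose hum h; omega
  exact hnet.false <| netEmbedding u (f m) (f (m + 1)) w (f (m - 1)) (f (m + 2))
    hum hsucc ((hD.adj_iff _ _).2 (by omega)) hwu.symm ((hD.adj_iff _ _).2 (by omega))
    ((hD.adj_iff _ _).2 (by omega)) hpred hsucc₂ (fun h => hwadj m h.symm)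
    ((hD.adj_iff _ _).not.2 (by omega)) (fun h => hwadj (m + 1) h.symm)
    ((hD.adj_iff _ _).not.2 (by omega)) (hwadj _) (hwadj _) ((hD.adj_iff _ _).not.2 (by omega))

theorem not_adj_of_adj_far (hD : IsGeodeticDoubleRay G f) (hclaw : IsEmpty (claw ↪g G))
    (hnet : IsEmpty (net ↪g G)) {w u : V} (hwu : G.Adj w u) (hwne : ∀ k, w ≠ f k)
    (hwadj : ∀ k, ¬ G.Adj w (f k)) (m : ℤ) : ¬ G.Adj u (f m) := by
  intro hum
  by_cases hpred : G.Adj u (f (m - 1))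
  · refine hD.comp_neg.not_adj_succ_of_adj hclaw hnet hwu (fun k => hwne (-k))
      (fun k => hwadj (-k)) (m := -m) (by rwa [neg_neg]) ?_
    rwa [show -(-m + 1) = m - 1 by ring]
  · exact hD.not_adj_succ_of_adj hclaw hnet hwu hwne hwadj hum <|
      hD.adj_succ_of_adj_of_not_adj_pred hclaw (fun k h => hwadj k (h ▸ hwu)) hum hpred

theorem exists_dist_le_one (hD : IsGeodeticDoubleRay G f) (hclaw : IsEmpty (claw ↪g G))
    (hnet : IsEmpty (net ↪g G)) (v : V) : ∃ m, G.dist v (f m) ≤ 1 := by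
  induction hn : G.dist v (f 0) using Nat.strong_induction_on generalizing v with
  | _ n ih =>
  by_contra! hfar
  have hvne (k : ℤ) : v ≠ f k := fun h => by simpa [h] using hfar k
  have hvadj (k : ℤ) : ¬ G.Adj v (f k) := fun h => by
    simpa [dist_eq_one_iff_adj.2 h] using hfar k
  obtain ⟨p, hp⟩ := exists_walk_of_dist_ne_zero (hfar 0).ne_bot
  cases p with
  | nil => exact hvne 0 rfl
  | @cons _ u _ hvu q =>
    have hcloser : G.dist u (f 0) < n := by
      have := dist_le q
      rw [Walk.length_cons] at hp
      omega
    obtain ⟨m, hm⟩ := ih _ hcloser u rfl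
    rcases Nat.le_one_iff_eq_zero_or_eq_one.1 hm with h0 | h1
    · rw [(q.reachable.trans (hD.reachable 0 m)).dist_eq_zero_iff] at h0
      exact hvadj m (h0 ▸ hvu)
    · exact hD.not_adj_of_adj_far hclaw hnet hvu hvne hvadj m (dist_eq_one_iff_adj.1 h1)

end IsGeodeticDoubleRay

theorem stmt11_general {V : Type u} (G : SimpleGraph V)
    (hclaw : IsEmpty (claw ↪g G)) (hnet : IsEmpty (net ↪g G))
    (f : ℤ → V)
    (hgeo : ∀ m n : ℤ, G.dist (f m) (f n) = (m - n).natAbs) :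
    ∀ v : V, ∃ m : ℤ, G.dist v (f m) ≤ 1 :=
  IsGeodeticDoubleRay.exists_dist_le_one hgeo hclaw hnet

theorem stmt11 {V : Type u} (G : SimpleGraph V)
    (hlf : ∀ v : V, (G.neighborSet v).Finite) (hconn : G.Connected)
    (hclaw : IsEmpty (claw ↪g G)) (hnet : IsEmpty (net ↪g G))
    (e₁ e₂ : G.end) (hne : e₁ ≠ e₂) (hall : ∀ e : G.end, e = e₁ ∨ e = e₂)
    (f : ℤ → V) (hD : IsDoubleRay G f)
    (hgeo : ∀ m n : ℤ, G.dist (f m) (f n) = (m - n).natAbs)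
    (h₁ : RayTo G (fun n : ℕ => f (n : ℤ)) e₁)
    (h₂ : RayTo G (fun n : ℕ => f (-(n : ℤ))) e₂) :
    ∀ v : V, ∃ m : ℤ, G.dist v (f m) ≤ 1 :=
  stmt11_general G hclaw hnet f hgeo
end
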